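/- arXiv:2105.00449 — 2 statements merged into one kernel-verified Lean document; each statement's English description precedes it below -/
import Mathlib

section
/- Let H and H_δ be Ising Hamiltonians on G=(V,E) with parameter-wise differences bounded by δ, and suppose ε > 0 satisfies 2δ(|E| + |V|) ≤ ε√(∑_b J_b² + ∑_x h_x²). Then for any configurations σ, τ with H_δ(σ) ≥ H_δ(τ), one has H(σ) ≥ H(τ) - ε·R_H, where R_H = max_{ξ,η}|H(ξ)-H(η)|. -/
open Finset

noncomputable section

def spin (b : Bool) : ℝ := if b then 1 else -1

def pairProd {V : Type*} (σ : V → Bool) : Sym2 V → ℝ :=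
  Sym2.lift ⟨fun x y => spin (σ x) * spin (σ y), fun x y => by ring⟩

def ham {V : Type*} [Fintype V] [DecidableEq V] (G : SimpleGraph V) [DecidableRel G.Adj]
    (J : Sym2 V → ℝ) (h : V → ℝ) (σ : V → Bool) : ℝ :=
  - ∑ e ∈ G.edgeFinset, J e * pairProd σ e - ∑ x, h x * spin (σ x)

/-- The set of vertices where the spins of `σ` and `τ` disagree. -/
def Dset {V : Type*} [Fintype V] [DecidableEq V] (σ τ : V → Bool) : Finset V :=
  univ.filter fun x => σ x ≠ τ x

def edgeXor {V : Type*} (σ : V → Bool) : Sym2 V → Bool :=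
  Sym2.lift ⟨fun x y => xor (σ x) (σ y), fun x y => Bool.xor_comm _ _⟩

/-- The set of edges where the link overlaps of `σ` and `τ` disagree. -/
def Wset {V : Type*} [Fintype V] [DecidableEq V] (G : SimpleGraph V) [DecidableRel G.Adj]
    (σ τ : V → Bool) : Finset (Sym2 V) :=
  G.edgeFinset.filter fun e => edgeXor σ e ≠ edgeXor τ e

/-!
In the Walsh basis `σ ↦ ∏_{x ∈ S} σ_x` of functions of the spins, `-H` has coefficient `J_b` on
each edge `b` and `h_x` on each singleton `{x}`. These characters are orthogonal and have mean zero
for `S ≠ ∅`, so over uniformly random configurations `H` has mean `0` and mean square `v_H`.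
Hence `∑_{σ,τ} (H σ - H τ)² = 2 · 4^|V| · v_H`, and some pair satisfies `|H σ - H τ| ≥ √v_H`,
i.e. `R_H ≥ √v_H`. On the other hand `|H - H_δ| ≤ δ (|E| + |V|)` pointwise since all spin
products are `±1`, so `H_δ σ ≥ H_δ τ` gives
`H σ ≥ H τ - 2δ(|E| + |V|) ≥ H τ - ε √v_H ≥ H τ - ε R_H`.
-/

lemma exists_two_mul_sum_sq_le_card_mul_sq_sub {ι : Type*} [Fintype ι] [Nonempty ι]
    {X : ι → ℝ} (hX : ∑ i, X i = 0) :
    ∃ i j, 2 * ∑ k, X k ^ 2 ≤ Fintype.card ι * (X i - X j) ^ 2 := by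
  have hpairs : ∑ p : ι × ι, (X p.1 - X p.2) ^ 2 = 2 * Fintype.card ι * ∑ k, X k ^ 2 := by
    simp only [Fintype.sum_prod_type, sub_sq, Finset.sum_add_distrib, Finset.sum_sub_distrib,
      ← Finset.mul_sum, ← Finset.sum_mul, hX, Finset.sum_const, Finset.card_univ, nsmul_eq_mul]
    ring
  by_contra! hlt
  have hsum := Finset.sum_lt_sum_of_nonempty (s := (Finset.univ : Finset (ι × ι)))
    Finset.univ_nonempty fun p _ => hlt p.1 p.2
  rw [← Finset.mul_sum, hpairs, Finset.sum_const, Finset.card_univ, Fintype.card_prod,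
    nsmul_eq_mul] at hsum
  push_cast at hsum
  linarith

namespace Ising

lemma spin_mul_self (b : Bool) : spin b * spin b = 1 := by cases b <;> norm_num [spin]

lemma abs_spin (b : Bool) : |spin b| = 1 := by cases b <;> norm_num [spin]

lemma abs_pairProd {V : Type*} (σ : V → Bool) (e : Sym2 V) : |pairProd σ e| = 1 := by
  induction e with
  | _ x y => simp [pairProd, abs_mul, abs_spin]

section Walsh

variable {V : Type*} [Fintype V] [DecidableEq V]

def walsh (S : Finset V) (σ : V → Bool) : ℝ := ∏ x ∈ S, spin (σ x)

lemma walsh_eq_prod_univ (S : Finset V) (σ : V → Bool) :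
    walsh S σ = ∏ x, if x ∈ S then spin (σ x) else 1 :=
  (Fintype.prod_ite_mem S _).symm

lemma walsh_mul_walsh (S T : Finset V) (σ : V → Bool) :
    walsh S σ * walsh T σ = walsh (symmDiff S T) σ := by
  simp only [walsh_eq_prod_univ, ← Finset.prod_mul_distrib]
  refine Finset.prod_congr rfl fun x _ => ?_
  by_cases hS : x ∈ S <;> by_cases hT : x ∈ T <;>
    simp [hS, hT, Finset.mem_symmDiff, spin_mul_self]

lemma sum_walsh_of_nonempty {S : Finset V} (hS : S.Nonempty) : ∑ σ : V → Bool, walsh S σ = 0 := by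
  obtain ⟨x, hx⟩ := hS
  simp only [walsh_eq_prod_univ]
  rw [← Fintype.prod_sum (fun y (b : Bool) => if y ∈ S then spin b else 1)]
  exact Finset.prod_eq_zero (Finset.mem_univ x) (by simp [hx, spin])

lemma sum_walsh_mul_walsh (S T : Finset V) :
    ∑ σ : V → Bool, walsh S σ * walsh T σ = if S = T then 2 ^ Fintype.card V else 0 := by
  simp only [walsh_mul_walsh]
  split_ifs with hST
  · simp [hST, walsh]
  · exact sum_walsh_of_nonempty (Finset.nonempty_iff_ne_empty.2 (by simpa using hST))

lemma sum_sum_mul_walsh_eq_zero {ι : Type*} (T : Finset ι) (c : ι → ℝ) {s : ι → Finset V}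
    (hs : ∀ i, (s i).Nonempty) :
    ∑ σ : V → Bool, ∑ i ∈ T, c i * walsh (s i) σ = 0 := by
  rw [Finset.sum_comm]
  exact Finset.sum_eq_zero fun i _ => by
    rw [← Finset.mul_sum, sum_walsh_of_nonempty (hs i), mul_zero]

lemma sum_sq_sum_mul_walsh {ι : Type*} (T : Finset ι) (c : ι → ℝ) {s : ι → Finset V}
    (hs : Set.InjOn s T) :
    ∑ σ : V → Bool, (∑ i ∈ T, c i * walsh (s i) σ) ^ 2 =
      2 ^ Fintype.card V * ∑ i ∈ T, c i ^ 2 := by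
  have hdiag : ∀ i ∈ T, ∑ j ∈ T, c i * c j * (if s i = s j then (2 : ℝ) ^ Fintype.card V else 0) =
      2 ^ Fintype.card V * c i ^ 2 := fun i hi => by
    rw [Finset.sum_eq_single_of_mem i hi fun j hj hji => by
      rw [if_neg fun h => hji (hs hj hi h.symm), mul_zero], if_pos rfl]
    ring
  have hexpand : ∀ σ : V → Bool, (∑ i ∈ T, c i * walsh (s i) σ) ^ 2 =
      ∑ i ∈ T, ∑ j ∈ T, c i * c j * (walsh (s i) σ * walsh (s j) σ) := fun σ => by
    rw [sq, Finset.sum_mul_sum]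
    exact Finset.sum_congr rfl fun i _ => Finset.sum_congr rfl fun j _ => by ring
  calc ∑ σ : V → Bool, (∑ i ∈ T, c i * walsh (s i) σ) ^ 2
      = ∑ i ∈ T, ∑ j ∈ T, c i * c j * ∑ σ : V → Bool, walsh (s i) σ * walsh (s j) σ := by
        simp only [hexpand, Finset.mul_sum]
        rw [Finset.sum_comm]
        exact Finset.sum_congr rfl fun i _ => Finset.sum_comm
    _ = 2 ^ Fintype.card V * ∑ i ∈ T, c i ^ 2 := by
        simp only [sum_walsh_mul_walsh, Finset.mul_sum]
        exact Finset.sum_congr rfl hdiag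

end Walsh

variable {V : Type*} [DecidableEq V]

def isingSupport : Sym2 V ⊕ V → Finset V := Sum.elim Sym2.toFinset fun x => {x}

lemma isingSupport_nonempty (i : Sym2 V ⊕ V) : (isingSupport i).Nonempty := by
  rcases i with e | x
  · exact Finset.nonempty_iff_ne_empty.2 (Sym2.toFinset_ne_empty e)
  · exact Finset.singleton_nonempty x

lemma pairProd_eq_walsh {e : Sym2 V} (he : ¬ e.IsDiag) (σ : V → Bool) :
    pairProd σ e = walsh e.toFinset σ := by
  induction e with
  | _ x y =>
    rw [Sym2.mk_isDiag_iff] at he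
    simp [pairProd, walsh, Sym2.toFinset_mk_eq, Finset.prod_pair he]

variable [Fintype V] (G : SimpleGraph V) [DecidableRel G.Adj]

lemma isingSupport_injOn :
    Set.InjOn isingSupport (G.edgeFinset.disjSum (Finset.univ : Finset V) : Set (Sym2 V ⊕ V)) := by
  have hcard : ∀ e ∈ G.edgeFinset, e.toFinset.card = 2 := fun e he =>
    Sym2.card_toFinset_of_not_isDiag e
      (G.not_isDiag_of_mem_edgeSet (SimpleGraph.mem_edgeFinset.mp he))
  have hne_singleton : ∀ e ∈ G.edgeFinset, ∀ x, e.toFinset ≠ {x} := fun e he x hex => by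
    simpa [hex] using hcard e he
  rintro (e | x) he (f | y) hf hef <;>
    simp only [Finset.mem_coe, Finset.inl_mem_disjSum] at he hf <;>
    simp only [isingSupport, Sum.elim_inl, Sum.elim_inr] at hef
  · exact congrArg Sum.inl (Sym2.ext fun x => by rw [← Sym2.mem_toFinset, hef, Sym2.mem_toFinset])
  · exact absurd hef (hne_singleton e he y)
  · exact absurd hef.symm (hne_singleton f hf x)
  · rw [Finset.singleton_inj.1 hef]

lemma ham_eq_neg_sum_walsh (J : Sym2 V → ℝ) (h : V → ℝ) (σ : V → Bool) :
    ham G J h σ = -∑ i ∈ G.edgeFinset.disjSum Finset.univ,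
      Sum.elim J h i * walsh (isingSupport i) σ := by
  have hpair : ∀ e ∈ G.edgeFinset, pairProd σ e = walsh e.toFinset σ := fun e he =>
    pairProd_eq_walsh (G.not_isDiag_of_mem_edgeSet (SimpleGraph.mem_edgeFinset.mp he)) σ
  rw [Finset.sum_disjSum, ham, Finset.sum_congr rfl fun e he => by rw [hpair e he]]
  simp [isingSupport, walsh]
  ring


lemma sum_ham (J : Sym2 V → ℝ) (h : V → ℝ) : ∑ σ, ham G J h σ = 0 := by
  simp only [ham_eq_neg_sum_walsh, Finset.sum_neg_distrib,
    sum_sum_mul_walsh_eq_zero _ _ isingSupport_nonempty, neg_zero]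

lemma sum_ham_sq (J : Sym2 V → ℝ) (h : V → ℝ) :
    ∑ σ, ham G J h σ ^ 2 =
      2 ^ Fintype.card V * (∑ e ∈ G.edgeFinset, J e ^ 2 + ∑ x, h x ^ 2) := by
  simp only [ham_eq_neg_sum_walsh, neg_sq]
  rw [sum_sq_sum_mul_walsh _ _ (isingSupport_injOn G), Finset.sum_disjSum]
  simp only [Sum.elim_inl, Sum.elim_inr]

lemma exists_sqrt_le_abs_ham_sub (J : Sym2 V → ℝ) (h : V → ℝ) :
    ∃ σ τ, √(∑ e ∈ G.edgeFinset, J e ^ 2 + ∑ x, h x ^ 2) ≤ |ham G J h σ - ham G J h τ| := by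
  obtain ⟨σ, τ, hστ⟩ := exists_two_mul_sum_sq_le_card_mul_sq_sub (sum_ham G J h)
  refine ⟨σ, τ, Real.sqrt_le_iff.2 ⟨abs_nonneg _, ?_⟩⟩
  rw [sum_ham_sq, Fintype.card_fun, Fintype.card_bool] at hστ
  have hv : 0 ≤ ∑ e ∈ G.edgeFinset, J e ^ 2 + ∑ x, h x ^ 2 := by positivity
  push_cast at hστ
  have h2v : 2 * (∑ e ∈ G.edgeFinset, J e ^ 2 + ∑ x, h x ^ 2) ≤ (ham G J h σ - ham G J h τ) ^ 2 :=
    le_of_mul_le_mul_left (by linarith) (by positivity : (0 : ℝ) < 2 ^ Fintype.card V)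
  rw [sq_abs]
  linarith

lemma ham_sub_ham (J J' : Sym2 V → ℝ) (h h' : V → ℝ) (σ : V → Bool) :
    ham G J h σ - ham G J' h' σ = ham G (J - J') (h - h') σ := by
  simp only [ham, Pi.sub_apply, sub_mul, Finset.sum_sub_distrib]
  ring

lemma abs_ham_le (J : Sym2 V → ℝ) (h : V → ℝ) (σ : V → Bool) :
    |ham G J h σ| ≤ ∑ e ∈ G.edgeFinset, |J e| + ∑ x, |h x| := by
  rw [ham, ← neg_add', abs_neg]
  refine (abs_add_le _ _).trans (add_le_add ?_ ?_) <;>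
    refine (Finset.abs_sum_le_sum_abs _ _).trans (le_of_eq (Finset.sum_congr rfl fun _ _ => ?_))
  · rw [abs_mul, abs_pairProd, mul_one]
  · rw [abs_mul, abs_spin, mul_one]

lemma abs_ham_sub_ham_le {J J' : Sym2 V → ℝ} {h h' : V → ℝ} {δ : ℝ}
    (hJ : ∀ e ∈ G.edgeFinset, |J e - J' e| ≤ δ) (hh : ∀ x, |h x - h' x| ≤ δ) (σ : V → Bool) :
    |ham G J h σ - ham G J' h' σ| ≤ δ * (G.edgeFinset.card + Fintype.card V) := by
  rw [ham_sub_ham]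
  refine (abs_ham_le G _ _ σ).trans ?_
  have hE := Finset.sum_le_card_nsmul _ _ _ hJ
  have hV := Finset.sum_le_card_nsmul _ _ _ fun x (_ : x ∈ Finset.univ) => hh x
  simp only [nsmul_eq_mul, Finset.card_univ] at hE hV
  simp only [Pi.sub_apply]
  linarith

end Ising

/-- Order preservation: if `2δ(|E|+|V|) ≤ ε √v_H`, then ordering under the perturbed
Hamiltonian is preserved by the original one up to error `ε R_H`. -/
theorem order_preservation {V : Type*} [Fintype V] [DecidableEq V]
    (G : SimpleGraph V) [DecidableRel G.Adj] (J J' : Sym2 V → ℝ) (h h' : V → ℝ) (δ ε : ℝ)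
    (hε : 0 < ε)
    (hJ : ∀ e ∈ G.edgeFinset, |J e - J' e| ≤ δ) (hh : ∀ x, |h x - h' x| ≤ δ)
    (hcond : 2 * δ * (G.edgeFinset.card + Fintype.card V) ≤
      ε * Real.sqrt (∑ e ∈ G.edgeFinset, (J e) ^ 2 + ∑ x, (h x) ^ 2))
    (R : ℝ)
    (hR : IsGreatest (Set.range fun p : (V → Bool) × (V → Bool) =>
      |ham G J h p.1 - ham G J h p.2|) R)
    (σ τ : V → Bool) (hord : ham G J' h' τ ≤ ham G J' h' σ) :
    ham G J h τ - ε * R ≤ ham G J h σ := by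
  obtain ⟨σ₀, τ₀, hspread⟩ := Ising.exists_sqrt_le_abs_ham_sub G J h
  have hsqrt_le_R := hspread.trans (hR.2 ⟨(σ₀, τ₀), rfl⟩)
  have hσ := abs_le.1 (Ising.abs_ham_sub_ham_le G hJ hh σ)
  have hτ := abs_le.1 (Ising.abs_ham_sub_ham_le G hJ hh τ)
  linarith [mul_le_mul_of_nonneg_left hsqrt_le_R hε.le]
end
end

section
/- Let G be the one-dimensional discrete torus on N vertices (cycle graph Z/NZ) with Hamiltonian H(σ) = -∑_{x=1}^{N} J_{x,x+1} σ_x σ_{x+1} (indices mod N). Then the total margin satisfies 2∑_{x=1}^N |J_{x,x+1}| - 4 min_x |J_{x,x+1}| ≤ R_H ≤ 2∑_{x=1}^N |J_{x,x+1}|, where R_H = max_σ H(σ) - min_σ H(σ). -/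
/-!
Walking once around the cycle from `x₀ + 1` and flipping the spin across every
antiferromagnetic bond gives a configuration satisfying every bond except possibly
`{x₀, x₀ + 1}`, so `min H ≤ -∑|J| + 2|J x₀|`; applied to `-J` this gives
`max H ≥ ∑|J| - 2|J x₀|`, and choosing `|J x₀|` minimal yields the lower bound.
The upper bound is `|H σ| ≤ ∑|J|` and the triangle inequality.
-/

open Finset

noncomputable section

/-- Ising Hamiltonian on the one-dimensional discrete torus `ℤ/Nℤ`, where `J x` is the
coupling on the edge `{x, x+1}` and there are no external fields. -/
def cycleHam (N : ℕ) [NeZero N] (J : ZMod N → ℝ) (σ : ZMod N → Bool) : ℝ :=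
  - ∑ x : ZMod N, J x * spin (σ x) * spin (σ (x + 1))

lemma abs_spin (b : Bool) : |spin b| = 1 := by cases b <;> simp [spin]

lemma spin_mul_spin_xor (c d : Bool) : spin c * spin (xor c d) = if d then -1 else 1 := by
  cases c <;> cases d <;> norm_num [spin]

lemma abs_bond (a : ℝ) (b c : Bool) : |a * spin b * spin c| = |a| := by
  rw [abs_mul, abs_mul, abs_spin, abs_spin, mul_one, mul_one]

lemma ZMod.val_add_one_of_ne_neg_one {n : ℕ} [NeZero n] {a : ZMod n} (ha : a ≠ -1) :
    (a + 1).val = a.val + 1 := by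
  have hcast : a + 1 = ((a.val + 1 : ℕ) : ZMod n) := by simp
  have hlt : a.val + 1 < n := by
    by_contra! hle
    have hn : a.val + 1 = n := le_antisymm (ZMod.val_lt a) hle
    exact ha (eq_neg_of_add_eq_zero_left (by rw [hcast, hn, ZMod.natCast_self]))
  rw [hcast, ZMod.val_natCast, Nat.mod_eq_of_lt hlt]

def alignedSpins {N : ℕ} (J : ZMod N → ℝ) (y : ZMod N) : ℕ → Bool
  | 0 => true
  | k + 1 => xor (alignedSpins J y k) (decide (J (y + k) < 0))

lemma alignedSpins_bond {N : ℕ} (J : ZMod N → ℝ) (y : ZMod N) (k : ℕ) :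
    J (y + k) * spin (alignedSpins J y k) * spin (alignedSpins J y (k + 1)) = |J (y + k)| := by
  rw [alignedSpins, mul_assoc, spin_mul_spin_xor]
  by_cases h : J (y + k) < 0
  · simp [h, abs_of_neg h]
  · simp [h, abs_of_nonneg (not_lt.mp h)]

lemma exists_spins_bond_eq_abs_of_ne {N : ℕ} [NeZero N] (J : ZMod N → ℝ) (x₀ : ZMod N) :
    ∃ σ : ZMod N → Bool, ∀ x ≠ x₀, J x * spin (σ x) * spin (σ (x + 1)) = |J x| := by
  refine ⟨fun x => alignedSpins J (x₀ + 1) (x - (x₀ + 1)).val, fun x hx => ?_⟩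
  have hne : x - (x₀ + 1) ≠ -1 := fun h => hx (by linear_combination h)
  have hsucc : (x + 1 - (x₀ + 1)).val = (x - (x₀ + 1)).val + 1 := by
    rw [← ZMod.val_add_one_of_ne_neg_one hne]; ring_nf
  have hx_eq : x₀ + 1 + ((x - (x₀ + 1)).val : ZMod N) = x := by
    rw [ZMod.natCast_zmod_val]; ring
  simpa only [hsucc, hx_eq] using alignedSpins_bond J (x₀ + 1) (x - (x₀ + 1)).val

lemma abs_cycleHam_le {N : ℕ} [NeZero N] (J : ZMod N → ℝ) (σ : ZMod N → Bool) :
    |cycleHam N J σ| ≤ ∑ x : ZMod N, |J x| := by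
  rw [cycleHam, abs_neg]
  exact (abs_sum_le_sum_abs _ _).trans_eq (sum_congr rfl fun x _ => abs_bond _ _ _)

lemma exists_cycleHam_le {N : ℕ} [NeZero N] (J : ZMod N → ℝ) (x₀ : ZMod N) :
    ∃ σ : ZMod N → Bool, cycleHam N J σ ≤ -∑ x : ZMod N, |J x| + 2 * |J x₀| := by
  obtain ⟨σ, hσ⟩ := exists_spins_bond_eq_abs_of_ne J x₀
  refine ⟨σ, ?_⟩
  have hrest : ∑ x ∈ univ.erase x₀, J x * spin (σ x) * spin (σ (x + 1)) =
      ∑ x ∈ univ.erase x₀, |J x| :=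
    sum_congr rfl fun x hx => hσ x (ne_of_mem_erase hx)
  have hx₀ : -|J x₀| ≤ J x₀ * spin (σ x₀) * spin (σ (x₀ + 1)) := by
    simpa only [abs_bond] using neg_abs_le (J x₀ * spin (σ x₀) * spin (σ (x₀ + 1)))
  rw [cycleHam, ← add_sum_erase _ _ (mem_univ x₀), hrest, ← add_sum_erase _ _ (mem_univ x₀)]
  linarith

lemma cycleHam_neg {N : ℕ} [NeZero N] (J : ZMod N → ℝ) (σ : ZMod N → Bool) :
    cycleHam N (-J) σ = -cycleHam N J σ := by
  simp [cycleHam, neg_mul]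

lemma exists_le_cycleHam {N : ℕ} [NeZero N] (J : ZMod N → ℝ) (x₀ : ZMod N) :
    ∃ σ : ZMod N → Bool, ∑ x : ZMod N, |J x| - 2 * |J x₀| ≤ cycleHam N J σ := by
  obtain ⟨σ, hσ⟩ := exists_cycleHam_le (-J) x₀
  refine ⟨σ, ?_⟩
  simp only [cycleHam_neg, Pi.neg_apply, abs_neg] at hσ
  linarith

theorem cycle_total_margin_general (N : ℕ) [NeZero N] (J : ZMod N → ℝ) (R : ℝ)
    (hR : IsGreatest (Set.range fun p : (ZMod N → Bool) × (ZMod N → Bool) =>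
      |cycleHam N J p.1 - cycleHam N J p.2|) R) :
    2 * ∑ x : ZMod N, |J x| - 4 * univ.inf' univ_nonempty (fun x : ZMod N => |J x|) ≤ R ∧
    R ≤ 2 * ∑ x : ZMod N, |J x| := by
  obtain ⟨⟨⟨σ, τ⟩, rfl⟩, hR⟩ := hR
  constructor
  · obtain ⟨x₀, -, hmin⟩ := exists_mem_eq_inf' univ_nonempty fun x : ZMod N => |J x|
    obtain ⟨σmax, hσmax⟩ := exists_le_cycleHam J x₀
    obtain ⟨σmin, hσmin⟩ := exists_cycleHam_le J x₀
    have hmargin : cycleHam N J σmax - cycleHam N J σmin ≤ _ :=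
      (le_abs_self _).trans (hR ⟨(σmax, σmin), rfl⟩)
    rw [hmin]
    linarith
  · calc |cycleHam N J σ - cycleHam N J τ|
        ≤ |cycleHam N J σ| + |cycleHam N J τ| := abs_sub _ _
      _ ≤ 2 * ∑ x : ZMod N, |J x| := by
        linarith [abs_cycleHam_le J σ, abs_cycleHam_le J τ]

/-- Total margin bounds for the one-dimensional torus:
`2∑|J_x| - 4 min|J_x| ≤ R_H ≤ 2∑|J_x|`. -/
theorem cycle_total_margin (N : ℕ) [NeZero N] (hN : 3 ≤ N) (J : ZMod N → ℝ) (R : ℝ)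
    (hR : IsGreatest (Set.range fun p : (ZMod N → Bool) × (ZMod N → Bool) =>
      |cycleHam N J p.1 - cycleHam N J p.2|) R) :
    2 * ∑ x : ZMod N, |J x| - 4 * univ.inf' univ_nonempty (fun x : ZMod N => |J x|) ≤ R ∧
    R ≤ 2 * ∑ x : ZMod N, |J x| :=
  cycle_total_margin_general N J R hR
end
end
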